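/- arXiv:2208.12974 — 3 statements merged into one kernel-verified Lean document; each statement's English description precedes it below -/
import Mathlib

section
/- (Khinchine's inequality) For every 0 < p < ∞ there exists a constant C_p > 0 such that for all n ∈ ℕ and all complex scalars λ₁,…,λₙ, C_p⁻¹·(∑_{k=1}^n |λ_k|²)^{p/2} ≤ ∫₀¹ |∑_{k=1}^n λ_k R_k(t)|^p dt ≤ C_p·(∑_{k=1}^n |λ_k|²)^{p/2}, where R_k are the Rademacher functions. -/
open Complex

/-- The Rademacher functions: `R₀(t) = 1` if `0 ≤ t - ⌊t⌋ < 1/2`, `-1` otherwise,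
and `R_n(t) = R₀(2^n t)`. -/
noncomputable def Rademacher (n : ℕ) (t : ℝ) : ℝ :=
  if Int.fract ((2:ℝ) ^ n * t) < 1/2 then 1 else -1

/-!
The Rademacher functions `R₁, …, Rₙ` behave like independent uniform random signs: the integral
over `[0, 1]` of any function of `(R₁(t), …, Rₙ(t))` is its average over the cube `{±1}ⁿ`, because
`R_{k+1}(t) = R_k(2t)` and `R₀` is `1` on the first half of `[0, 1]` and `-1` on the second.
On the cube, `X = ∑ λₖ εₖ` has second moment exactly `S = ∑ |λₖ|²` (parallelogram law), and its
real and imaginary parts are sub-Gaussian: `𝔼 exp (∑ aₖ εₖ) = ∏ cosh aₖ ≤ exp (∑ aₖ² / 2)`.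
With `y ^ q ≤ q ^ q e ^ y` this gives `𝔼 |X| ^ q ≤ C_q S ^ (q / 2)` for every `q > 0`.
Conversely `S ^ (p / 2) ≤ 𝔼 |X| ^ p` by Jensen when `p ≥ 2`, while for `p < 2` Cauchy–Schwarz gives
`S² ≤ 𝔼 |X| ^ p · 𝔼 |X| ^ (4 - p)`, and the second factor is bounded by the upper estimate.
-/

namespace Khinchine

open Finset MeasureTheory Function
open scoped BigOperators

lemma intervalIntegrable_comp_of_finite {α : Type*} [Finite α] [MeasurableSpace α]
    [MeasurableSingletonClass α] {g : ℝ → α} (hg : Measurable g) (G : α → ℝ) (a b : ℝ) :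
    IntervalIntegrable (fun t => G (g t)) volume a b := by
  obtain ⟨M, hM⟩ := Finite.exists_le fun x => ‖G x‖
  exact (intervalIntegrable_const (c := M)).mono_fun'
    ((measurable_of_finite G).comp hg).aestronglyMeasurable (ae_of_all _ fun t => hM (g t))

lemma integral_comp_two_mul_zero_half (h : ℝ → ℝ) :
    ∫ t in (0:ℝ)..1 / 2, h (2 * t) = 2⁻¹ * ∫ t in (0:ℝ)..1, h t := by
  rw [intervalIntegral.integral_comp_mul_left h two_ne_zero]
  norm_num

lemma _root_.Function.Periodic.integral_comp_two_mul_half_one {h : ℝ → ℝ} (hh : Periodic h 1) :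
    ∫ t in (1 / 2 : ℝ)..1, h (2 * t) = 2⁻¹ * ∫ t in (0:ℝ)..1, h t := by
  rw [intervalIntegral.integral_comp_mul_left h two_ne_zero]
  have := hh.intervalIntegral_add_eq 1 0
  norm_num at this ⊢
  rw [this]

lemma rpow_le_exp_mul {x q : ℝ} (hx : 0 ≤ x) (hq : 0 ≤ q) : x ^ q ≤ Real.exp (q * x) := by
  rcases hx.eq_or_lt with rfl | hx
  · simpa using Real.zero_rpow_le_one q
  rw [Real.rpow_def_of_pos hx, Real.exp_le_exp]
  nlinarith [Real.log_le_sub_one_of_pos hx]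

lemma rpow_le_mul_exp {y q : ℝ} (hy : 0 ≤ y) (hq : 0 < q) : y ^ q ≤ q ^ q * Real.exp y :=
  calc y ^ q = q ^ q * (y / q) ^ q := by
        rw [← Real.mul_rpow hq.le (div_nonneg hy hq.le), mul_div_cancel₀ _ hq.ne']
    _ ≤ q ^ q * Real.exp (q * (y / q)) := by
        gcongr; exact rpow_le_exp_mul (div_nonneg hy hq.le) hq.le
    _ = q ^ q * Real.exp y := by rw [mul_div_cancel₀ _ hq.ne']

lemma rpow_expect_le_expect_rpow {ι : Type*} [Fintype ι] [Nonempty ι] {r : ℝ} (hr : 1 ≤ r)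
    {f : ι → ℝ} (hf : ∀ i, 0 ≤ f i) : (𝔼 i, f i) ^ r ≤ 𝔼 i, f i ^ r := by
  have holder := Real.compact_inner_le_weight_mul_Lp_of_nonneg univ hr (w := 1) (f := f)
    (fun _ => zero_le_one) hf
  simp only [Pi.one_apply, one_mul, Fintype.expect_const, Real.one_rpow] at holder
  calc (𝔼 i, f i) ^ r ≤ ((𝔼 i, f i ^ r) ^ r⁻¹) ^ r := by
        gcongr
        exact expect_nonneg fun i _ => hf i
    _ = 𝔼 i, f i ^ r := by
        rw [← Real.rpow_mul (expect_nonneg fun i _ => Real.rpow_nonneg (hf i) r),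
          inv_mul_cancel₀ (by linarith), Real.rpow_one]

lemma sq_expect_sq_le_expect_rpow_mul_expect_rpow {ι : Type*} [Fintype ι] (p : ℝ) {f : ι → ℝ}
    (hf : ∀ i, 0 ≤ f i) : (𝔼 i, f i ^ 2) ^ 2 ≤ (𝔼 i, f i ^ p) * 𝔼 i, f i ^ (4 - p) := by
  have hsplit : ∀ i, f i ^ 2 = f i ^ (p / 2) * f i ^ (2 - p / 2) := fun i => by
    rw [← Real.rpow_add' (hf i) (by norm_num), ← Real.rpow_natCast]; norm_num
  have hsq : ∀ i (s : ℝ), (f i ^ s) ^ 2 = f i ^ (s * 2) := fun i s => by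
    rw [← Real.rpow_natCast, ← Real.rpow_mul (hf i)]; norm_num
  have := expect_mul_sq_le_sq_mul_sq univ (fun i => f i ^ (p / 2)) fun i => f i ^ (2 - p / 2)
  simp only [← hsplit, hsq] at this
  rwa [div_mul_cancel₀ p two_ne_zero, show (2 - p / 2) * 2 = 4 - p by ring] at this

def boolSign (b : Bool) : ℝ := if b then -1 else 1

/-- The `(n + 1)`-st binary digit of `t`. -/
noncomputable def digit (n : ℕ) (t : ℝ) : Bool := decide (1 / 2 ≤ Int.fract ((2:ℝ) ^ n * t))

lemma rademacher_eq_boolSign_digit (n : ℕ) (t : ℝ) : Rademacher n t = boolSign (digit n t) := by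
  unfold Rademacher boolSign digit
  split_ifs <;> simp_all [not_le.mpr, not_lt.mp]

lemma digit_succ (n : ℕ) (t : ℝ) : digit (n + 1) t = digit n (2 * t) := by
  rw [digit, digit, pow_succ, mul_assoc]

lemma periodic_digit (n : ℕ) : Periodic (digit n) 1 := fun t => by
  have : (2:ℝ) ^ n * (t + 1) = 2 ^ n * t + (2 ^ n : ℕ) := by push_cast; ring
  rw [digit, digit, this, Int.fract_add_natCast]

lemma digit_zero_of_mem_Ioo_zero_half {t : ℝ} (ht : t ∈ Set.Ioo 0 (1 / 2)) :
    digit 0 t = false := by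
  have : Int.fract t = t := Int.fract_eq_self.mpr ⟨ht.1.le, by linarith [ht.2]⟩
  simpa [digit, this] using ht.2

lemma digit_zero_of_mem_Ioo_half_one {t : ℝ} (ht : t ∈ Set.Ioo (1 / 2) 1) :
    digit 0 t = true := by
  have : Int.fract t = t := Int.fract_eq_self.mpr ⟨by linarith [ht.1], ht.2⟩
  simpa [digit, this] using ht.1.le

lemma measurable_digit (n : ℕ) : Measurable (digit n) :=
  measurable_to_bool <| by
    simpa [digit, Set.preimage] using
      measurableSet_le measurable_const (measurable_fract.comp (measurable_const_mul _))

lemma expect_cube_succ {n : ℕ} (G : (Fin (n + 1) → Bool) → ℝ) :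
    𝔼 ε, G ε = 2⁻¹ * (𝔼 ε, G (Fin.cons false ε) + 𝔼 ε, G (Fin.cons true ε)) := by
  simp only [Fintype.expect_eq_sum_div_card, Fintype.card_fun, Fintype.card_bool, Fintype.card_fin]
  rw [← (Fin.consEquiv fun _ => Bool).sum_comp, Fintype.sum_prod_type, Fintype.sum_bool]
  simp only [Fin.consEquiv, Equiv.coe_fn_mk]
  push_cast
  ring

theorem integral_digits_eq_expect (n : ℕ) (G : (Fin n → Bool) → ℝ) :
    ∫ t in (0:ℝ)..1, G (fun k => digit k t) = 𝔼 ε, G ε := by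
  induction n with
  | zero => simp [Unique.eq_default]
  | succ n ih =>
    have hdigits : ∀ t, (fun k : Fin (n + 1) => digit k t)
        = Fin.cons (digit 0 t) (fun k : Fin n => digit k (2 * t)) := fun t => by
      ext k
      cases k using Fin.cases <;> simp [digit_succ]
    have hperiodic : ∀ b, Periodic (fun t => G (Fin.cons b fun k : Fin n => digit k t)) 1 :=
      fun b t => by simp only [periodic_digit _ t]
    have hint := intervalIntegrable_comp_of_finite
      (measurable_pi_lambda _ fun k : Fin (n + 1) => measurable_digit k) G
    have hfirst : ∫ t in (0:ℝ)..1 / 2, G (fun k => digit k t)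
        = 2⁻¹ * 𝔼 ε, G (Fin.cons false ε) := by
      rw [intervalIntegral.integral_congr_Ioo_of_le (by norm_num) fun t ht => by
        rw [hdigits, digit_zero_of_mem_Ioo_zero_half ht],
        integral_comp_two_mul_zero_half (fun t => G (Fin.cons false fun k : Fin n => digit k t)),
        ih fun ε => G (Fin.cons false ε)]
    have hsecond : ∫ t in (1 / 2 : ℝ)..1, G (fun k => digit k t)
        = 2⁻¹ * 𝔼 ε, G (Fin.cons true ε) := by
      rw [intervalIntegral.integral_congr_Ioo_of_le (by norm_num) fun t ht => by
        rw [hdigits, digit_zero_of_mem_Ioo_half_one ht],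
        (hperiodic true).integral_comp_two_mul_half_one, ih fun ε => G (Fin.cons true ε)]
    rw [← intervalIntegral.integral_add_adjacent_intervals (hint 0 (1 / 2)) (hint (1 / 2) 1),
      hfirst, hsecond, expect_cube_succ, mul_add]

theorem integral_digits_succ_eq_expect (n : ℕ) (G : (Fin n → Bool) → ℝ) :
    ∫ t in (0:ℝ)..1, G (fun k => digit (k.1 + 1) t) = 𝔼 ε, G ε := by
  rw [show (fun t => G fun k => digit (k.1 + 1) t)
      = fun t => G (Fin.tail fun k : Fin (n + 1) => digit k t) from rfl,
    integral_digits_eq_expect (n + 1) fun ε => G (Fin.tail ε), expect_cube_succ]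
  simp only [Fin.tail_cons]
  ring

theorem integral_rademacher_eq_expect (n : ℕ) (F : (Fin n → ℝ) → ℝ) :
    ∫ t in (0:ℝ)..1, F (fun k => Rademacher (k.1 + 1) t)
      = 𝔼 (ε : Fin n → Bool), F (fun k => boolSign (ε k)) := by
  simp only [rademacher_eq_boolSign_digit]
  exact integral_digits_succ_eq_expect n fun ε => F fun k => boolSign (ε k)

variable {E : Type*} {n : ℕ}

def signedSum [AddCommMonoid E] [Module ℝ E] (v : Fin n → E) (ε : Fin n → Bool) : E :=
  ∑ k, boolSign (ε k) • v k

lemma signedSum_cons [AddCommMonoid E] [Module ℝ E] (v : Fin (n + 1) → E) (b : Bool)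
    (ε : Fin n → Bool) :
    signedSum v (Fin.cons b ε) = boolSign b • v 0 + signedSum (Fin.tail v) ε := by
  simp [signedSum, Fin.sum_univ_succ, Fin.tail]

lemma signedSum_smul [AddCommMonoid E] [Module ℝ E] (c : ℝ) (v : Fin n → E) (ε : Fin n → Bool) :
    signedSum (c • v) ε = c • signedSum v ε := by
  simp [signedSum, Finset.smul_sum, smul_comm c]

theorem expect_norm_sq_signedSum [NormedAddCommGroup E] [InnerProductSpace ℝ E] (v : Fin n → E) :
    𝔼 ε, ‖signedSum v ε‖ ^ 2 = ∑ k, ‖v k‖ ^ 2 := by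
  induction n with
  | zero => simp [signedSum]
  | succ n ih =>
    have parallelogram : ∀ x y : E, 2⁻¹ * (‖x + y‖ ^ 2 + ‖-x + y‖ ^ 2) = ‖x‖ ^ 2 + ‖y‖ ^ 2 := by
      intro x y
      rw [neg_add_eq_sub, norm_add_sq_real, norm_sub_sq_real, real_inner_comm]
      ring
    simp only [expect_cube_succ, signedSum_cons, boolSign, Bool.false_eq_true, if_false, if_true,
      one_smul, neg_smul, ← Finset.expect_add_distrib, Finset.mul_expect, parallelogram]
    rw [Finset.expect_add_distrib, Finset.expect_const univ_nonempty, ih, Fin.sum_univ_succ]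
    rfl

lemma expect_exp_signedSum (a : Fin n → ℝ) :
    𝔼 ε, Real.exp (signedSum a ε) = ∏ k, Real.cosh (a k) := by
  induction n with
  | zero => simp [signedSum]
  | succ n ih =>
    simp only [expect_cube_succ, signedSum_cons, boolSign, Bool.false_eq_true, if_false, if_true,
      smul_eq_mul, one_mul, neg_one_mul, Real.exp_add, ← Finset.mul_expect, ih]
    rw [Fin.prod_univ_succ, Real.cosh_eq]
    simp only [Fin.tail]
    ring

lemma expect_exp_signedSum_le (a : Fin n → ℝ) :
    𝔼 ε, Real.exp (signedSum a ε) ≤ Real.exp ((∑ k, a k ^ 2) / 2) := by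
  rw [expect_exp_signedSum, Finset.sum_div, Real.exp_sum]
  exact Finset.prod_le_prod (fun k _ => (Real.cosh_pos _).le)
    fun k _ => Real.cosh_le_exp_half_sq _

lemma expect_exp_abs_signedSum_le (a : Fin n → ℝ) :
    𝔼 ε, Real.exp |signedSum a ε| ≤ 2 * Real.exp ((∑ k, a k ^ 2) / 2) := by
  have hneg : ∀ ε, -signedSum a ε = signedSum (-a) ε := fun ε => by
    simpa using (signedSum_smul (-1) a ε).symm
  calc 𝔼 ε, Real.exp |signedSum a ε|
      ≤ 𝔼 ε, (Real.exp (signedSum a ε) + Real.exp (signedSum (-a) ε)) :=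
        expect_le_expect fun ε _ => by rw [← hneg]; exact Real.exp_abs_le _
    _ ≤ Real.exp ((∑ k, a k ^ 2) / 2) + Real.exp ((∑ k, (-a) k ^ 2) / 2) := by
        rw [expect_add_distrib]
        exact add_le_add (expect_exp_signedSum_le a) (expect_exp_signedSum_le (-a))
    _ = 2 * Real.exp ((∑ k, a k ^ 2) / 2) := by simp only [Pi.neg_apply, neg_sq]; ring

lemma expect_exp_two_mul_abs_signedSum_le (a : Fin n → ℝ) :
    𝔼 ε, Real.exp (2 * |signedSum a ε|) ≤ 2 * Real.exp (2 * ∑ k, a k ^ 2) := by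
  have hdouble : ∀ ε, 2 * |signedSum a ε| = |signedSum ((2:ℝ) • a) ε| := fun ε => by
    rw [signedSum_smul, smul_eq_mul, abs_mul, abs_two]
  simp only [hdouble]
  refine (expect_exp_abs_signedSum_le _).trans_eq ?_
  simp only [Pi.smul_apply, smul_eq_mul, mul_pow, ← Finset.mul_sum]
  ring_nf

lemma re_signedSum (v : Fin n → ℂ) (ε : Fin n → Bool) :
    (signedSum v ε).re = signedSum (fun k => (v k).re) ε := by
  simp [signedSum, Complex.re_sum]

lemma im_signedSum (v : Fin n → ℂ) (ε : Fin n → Bool) :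
    (signedSum v ε).im = signedSum (fun k => (v k).im) ε := by
  simp [signedSum, Complex.im_sum]

lemma expect_exp_norm_signedSum_le (v : Fin n → ℂ) :
    𝔼 ε, Real.exp ‖signedSum v ε‖ ≤ 2 * Real.exp (2 * ∑ k, ‖v k‖ ^ 2) := by
  set S := ∑ k, ‖v k‖ ^ 2
  set A := signedSum fun k => (v k).re
  set B := signedSum fun k => (v k).im
  have hpoint : ∀ ε, Real.exp ‖signedSum v ε‖
      ≤ 2⁻¹ * (Real.exp (2 * |A ε|) + Real.exp (2 * |B ε|)) := fun ε => by
    have hamgm := two_mul_le_add_sq (Real.exp |A ε|) (Real.exp |B ε|)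
    have hnorm : ‖signedSum v ε‖ ≤ |A ε| + |B ε| := by
      simpa only [A, B, re_signedSum, im_signedSum] using
        Complex.norm_le_abs_re_add_abs_im (signedSum v ε)
    rw [← Real.exp_le_exp, Real.exp_add] at hnorm
    rw [← Real.exp_nat_mul, ← Real.exp_nat_mul] at hamgm
    push_cast at hamgm
    linarith
  have hsplit : ∑ k, (v k).re ^ 2 + ∑ k, (v k).im ^ 2 = S := by
    rw [← Finset.sum_add_distrib]
    exact Finset.sum_congr rfl fun k _ => by rw [Complex.sq_norm, Complex.normSq_apply]; ring
  have hre_nonneg : 0 ≤ ∑ k, (v k).re ^ 2 := by positivity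
  have him_nonneg : 0 ≤ ∑ k, (v k).im ^ 2 := by positivity
  calc 𝔼 ε, Real.exp ‖signedSum v ε‖
      ≤ 2⁻¹ * (𝔼 ε, Real.exp (2 * |A ε|) + 𝔼 ε, Real.exp (2 * |B ε|)) := by
        rw [← expect_add_distrib, mul_expect]
        exact expect_le_expect fun ε _ => hpoint ε
    _ ≤ 2⁻¹ * (2 * Real.exp (2 * S) + 2 * Real.exp (2 * S)) := by
        gcongr
        · exact (expect_exp_two_mul_abs_signedSum_le _).trans (by gcongr; linarith)
        · exact (expect_exp_two_mul_abs_signedSum_le _).trans (by gcongr; linarith)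
    _ = 2 * Real.exp (2 * S) := by ring

noncomputable def upperConstant (q : ℝ) : ℝ := 2 * Real.exp 2 * q ^ q

lemma upperConstant_pos {q : ℝ} (hq : 0 < q) : 0 < upperConstant q := by
  unfold upperConstant
  have := Real.rpow_pos_of_pos hq q
  positivity

theorem expect_norm_rpow_signedSum_le {q : ℝ} (hq : 0 < q) (v : Fin n → ℂ) :
    𝔼 ε, ‖signedSum v ε‖ ^ q ≤ upperConstant q * (∑ k, ‖v k‖ ^ 2) ^ (q / 2) := by
  set S := ∑ k, ‖v k‖ ^ 2
  rcases (show 0 ≤ S by positivity).eq_or_lt with hS | hS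
  · have hv : v = 0 := funext fun k => by
      simpa using (Finset.sum_eq_zero_iff_of_nonneg fun k _ => by positivity).mp hS.symm k
    simp [hv, signedSum, ← hS, Real.zero_rpow hq.ne', Real.zero_rpow (half_pos hq).ne']
  set r := √S with hr_def
  have hr : 0 < r := Real.sqrt_pos.mpr hS
  have hnorm : ∀ ε, ‖signedSum v ε‖ = r * ‖signedSum (r⁻¹ • v) ε‖ := fun ε => by
    rw [signedSum_smul, norm_smul, Real.norm_of_nonneg (inv_pos.mpr hr).le,
      mul_inv_cancel_left₀ hr.ne']
  have hunit : ∑ k, ‖(r⁻¹ • v) k‖ ^ 2 = 1 := by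
    simp only [Pi.smul_apply, norm_smul, mul_pow, ← Finset.mul_sum, norm_inv, Real.norm_eq_abs,
      sq_abs, inv_pow, hr_def, Real.sq_sqrt hS.le]
    exact inv_mul_cancel₀ hS.ne'
  calc 𝔼 ε, ‖signedSum v ε‖ ^ q
      = r ^ q * 𝔼 ε, ‖signedSum (r⁻¹ • v) ε‖ ^ q := by
        simp only [hnorm, Real.mul_rpow hr.le (norm_nonneg _), mul_expect]
    _ ≤ r ^ q * 𝔼 ε, q ^ q * Real.exp ‖signedSum (r⁻¹ • v) ε‖ := by
        gcongr with ε; exact rpow_le_mul_exp (norm_nonneg _) hq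
    _ ≤ r ^ q * (q ^ q * (2 * Real.exp (2 * 1))) := by
        rw [← mul_expect, ← hunit]; gcongr; exact expect_exp_norm_signedSum_le _
    _ = upperConstant q * S ^ (q / 2) := by
        rw [hr_def, Real.sqrt_eq_rpow, ← Real.rpow_mul hS.le, upperConstant]; ring_nf

theorem sum_norm_sq_rpow_le_expect_of_two_le [NormedAddCommGroup E] [InnerProductSpace ℝ E]
    {p : ℝ} (hp : 2 ≤ p) (v : Fin n → E) :
    (∑ k, ‖v k‖ ^ 2) ^ (p / 2) ≤ 𝔼 ε, ‖signedSum v ε‖ ^ p := by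
  rw [← expect_norm_sq_signedSum]
  refine (rpow_expect_le_expect_rpow (by linarith) fun ε => by positivity).trans_eq ?_
  congr with ε
  rw [← Real.rpow_natCast, ← Real.rpow_mul (norm_nonneg _)]
  norm_num
  ring_nf

theorem sum_norm_sq_rpow_le_expect_of_lt_two {p : ℝ} (hp : 0 < p) (hp2 : p < 2) (v : Fin n → ℂ) :
    (∑ k, ‖v k‖ ^ 2) ^ (p / 2) ≤ upperConstant (4 - p) * 𝔼 ε, ‖signedSum v ε‖ ^ p := by
  set S := ∑ k, ‖v k‖ ^ 2
  have hE : 0 ≤ 𝔼 ε, ‖signedSum v ε‖ ^ p := expect_nonneg fun ε _ => by positivity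
  rcases (show 0 ≤ S by positivity).eq_or_lt with hS | hS
  · rw [← hS, Real.zero_rpow (by positivity)]
    exact mul_nonneg (upperConstant_pos (by linarith)).le hE
  have cauchySchwarz :=
    sq_expect_sq_le_expect_rpow_mul_expect_rpow p fun ε => norm_nonneg (signedSum v ε)
  rw [expect_norm_sq_signedSum] at cauchySchwarz
  have upper := expect_norm_rpow_signedSum_le (show 0 < 4 - p by linarith) v
  have hsplit : S ^ 2 = S ^ (p / 2) * S ^ ((4 - p) / 2) := by
    rw [← Real.rpow_add hS, ← Real.rpow_natCast]; ring_nf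
  refine le_of_mul_le_mul_right ?_ (Real.rpow_pos_of_pos hS ((4 - p) / 2))
  calc S ^ (p / 2) * S ^ ((4 - p) / 2) = S ^ 2 := hsplit.symm
    _ ≤ (𝔼 ε, ‖signedSum v ε‖ ^ p) * (upperConstant (4 - p) * S ^ ((4 - p) / 2)) :=
        cauchySchwarz.trans (by gcongr)
    _ = _ := by ring

theorem sum_norm_sq_rpow_le_expect {p : ℝ} (hp : 0 < p) (v : Fin n → ℂ) :
    (∑ k, ‖v k‖ ^ 2) ^ (p / 2) ≤ max 1 (upperConstant (4 - p)) * 𝔼 ε, ‖signedSum v ε‖ ^ p := by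
  have hE : 0 ≤ 𝔼 ε, ‖signedSum v ε‖ ^ p := expect_nonneg fun ε _ => by positivity
  rcases le_or_gt 2 p with hp2 | hp2
  · exact (sum_norm_sq_rpow_le_expect_of_two_le hp2 v).trans
      (le_mul_of_one_le_left hE (le_max_left _ _))
  · exact (sum_norm_sq_rpow_le_expect_of_lt_two hp hp2 v).trans (by gcongr; exact le_max_right _ _)

lemma integral_norm_rpow_sum_mul_rademacher (p : ℝ) (lam : Fin n → ℂ) :
    ∫ t in (0:ℝ)..1, ‖∑ k, lam k * (Rademacher (k.1 + 1) t : ℂ)‖ ^ p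
      = 𝔼 ε, ‖signedSum lam ε‖ ^ p := by
  refine (integral_rademacher_eq_expect n fun x => ‖∑ k, lam k * (x k : ℂ)‖ ^ p).trans ?_
  simp [signedSum, Complex.real_smul, mul_comm]

end Khinchine

open Khinchine in
/-- Khinchine's inequality: for `0 < p < ∞` there is `C_p > 0` with
`C_p⁻¹ (∑ |λ_k|²)^{p/2} ≤ ∫₀¹ |∑ λ_k R_k(t)|^p dt ≤ C_p (∑ |λ_k|²)^{p/2}`. -/
theorem stmt2 (p : ℝ) (hp : 0 < p) :
    ∃ C : ℝ, 0 < C ∧ ∀ (n : ℕ) (lam : Fin n → ℂ),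
      C⁻¹ * (∑ k, ‖lam k‖ ^ 2) ^ (p / 2) ≤
        (∫ t in (0:ℝ)..1, ‖∑ k, lam k * (Rademacher (k.1 + 1) t : ℂ)‖ ^ p) ∧
      (∫ t in (0:ℝ)..1, ‖∑ k, lam k * (Rademacher (k.1 + 1) t : ℂ)‖ ^ p) ≤
        C * (∑ k, ‖lam k‖ ^ 2) ^ (p / 2) := by
  have hC : 0 < max (upperConstant p) (max 1 (upperConstant (4 - p))) :=
    lt_max_of_lt_left (upperConstant_pos hp)
  refine ⟨_, hC, fun n lam => ?_⟩
  rw [integral_norm_rpow_sum_mul_rademacher]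
  constructor
  · rw [inv_mul_le_iff₀ hC]
    exact (sum_norm_sq_rpow_le_expect hp lam).trans <| mul_le_mul_of_nonneg_right
      (le_max_right _ _) (Finset.expect_nonneg fun ε _ => by positivity)
  · exact (expect_norm_rpow_signedSum_le hp lam).trans <| mul_le_mul_of_nonneg_right
      (le_max_left _ _) (by positivity)
end

section
/- Let τ ∈ ℒ, δ ∈ (0, m_τ), and let {z_k} be a (δ,τ)-lattice (so {D_{3δ}(z_k)} covers 𝔻 with finite multiplicity N). Then for any z ∈ 𝔻 and j ≥ 0, ∑_{z_k ∈ R_j(z)} τ(z_k)² ≲ 2^{2j} τ(z)², where R_j(z) = {ξ ∈ 𝔻 : 2^j δτ(z) < |z−ξ| ≤ 2^{j+1}δτ(z)}, with implicit constant independent of z and j. -/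
open Complex Metric MeasureTheory Module
open scoped ENNReal

/-!
For `z_k` in the annulus `R_j(w)`, the Lipschitz bound on `τ` gives `τ(z_k) ≤ 2^{j+1} τ(w)`, so the
disc `D_δ(z_k)` lies in the disc of radius `2^{j+2} δ τ(w)` about `w`. These discs lie in `𝔻` and
inside the `D_{3δ}(z_k)`, so they overlap at most `N` times; comparing areas gives
`δ² ∑ τ(z_k)² ≤ N (2^{j+2} δ τ(w))²`.
-/

theorem tsum_measure_le_mul_of_multiplicity_le {α ι : Type*} [MeasurableSpace α]
    [Countable ι] (μ : Measure α) {s : ι → Set α} (hs : ∀ i, MeasurableSet (s i)) {t : Set α}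
    (hst : ∀ i, s i ⊆ t) {N : ℝ≥0∞} (hN : ∀ y ∈ t, ∑' i, (s i).indicator 1 y ≤ N) :
    ∑' i, μ (s i) ≤ N * μ t :=
  calc ∑' i, μ (s i) = ∑' i, ∫⁻ y in t, (s i).indicator 1 y ∂μ := by
        refine tsum_congr fun i => ?_
        rw [lintegral_indicator_one (hs i), Measure.restrict_apply (hs i),
          Set.inter_eq_left.2 (hst i)]
    _ = ∫⁻ y in t, ∑' i, (s i).indicator 1 y ∂μ :=
        (lintegral_tsum fun i => (measurable_one.indicator (hs i)).aemeasurable).symm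
    _ ≤ ∫⁻ _ in t, N ∂μ := setLIntegral_mono measurable_const hN
    _ = N * μ t := setLIntegral_const t N

theorem tsum_ofReal_pow_finrank_le_of_multiplicity_le {E ι : Type*}
    [NormedAddCommGroup E] [NormedSpace ℝ E] [MeasurableSpace E] [BorelSpace E]
    [FiniteDimensional ℝ E] [Nontrivial E] [Countable ι] {c : ι → E} {r : ι → ℝ}
    (hr : ∀ i, 0 ≤ r i) {x : E} {R : ℝ} (hR : 0 ≤ R)
    (hsub : ∀ i, ball (c i) (r i) ⊆ ball x R) {N : ℝ≥0∞}
    (hN : ∀ y ∈ ball x R, ∑' i, (ball (c i) (r i)).indicator 1 y ≤ N) :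
    ∑' i, ENNReal.ofReal (r i ^ finrank ℝ E) ≤ N * ENNReal.ofReal (R ^ finrank ℝ E) := by
  let μ : Measure E := Measure.addHaar
  have hμ₀ : μ (ball 0 1) ≠ 0 := (measure_ball_pos μ 0 one_pos).ne'
  have hμ_top : μ (ball 0 1) ≠ ⊤ := measure_ball_lt_top.ne
  rw [← ENNReal.mul_le_mul_iff_left hμ₀ hμ_top, ← ENNReal.tsum_mul_right, mul_assoc,
    ← Measure.addHaar_ball μ x hR]
  calc ∑' i, ENNReal.ofReal (r i ^ finrank ℝ E) * μ (ball 0 1)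
        = ∑' i, μ (ball (c i) (r i)) := tsum_congr fun i => (Measure.addHaar_ball μ _ (hr i)).symm
    _ ≤ N * μ (ball x R) :=
        tsum_measure_le_mul_of_multiplicity_le μ (fun _ => measurableSet_ball) hsub hN

theorem tsum_indicator_le_of_subset_of_multiplicity_le {α ι κ : Type*} {s : ι → Set α}
    {s' : κ → Set α} {f : ι → κ} (hf : Function.Injective f) (hss' : ∀ i, s i ⊆ s' (f i))
    {U : Set α} (hsU : ∀ i, s i ⊆ U) {N : ℝ≥0∞}
    (hN : ∀ y ∈ U, ∑' k, (s' k).indicator 1 y ≤ N) (y : α) :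
    ∑' i, (s i).indicator 1 y ≤ N := by
  by_cases hy : ∃ i, y ∈ s i
  · obtain ⟨i, hi⟩ := hy
    calc ∑' i, (s i).indicator 1 y ≤ ∑' i, (s' (f i)).indicator 1 y :=
          ENNReal.tsum_le_tsum fun i =>
            Set.indicator_le_indicator_of_subset (hss' i) (fun _ => zero_le) y
      _ ≤ ∑' k, (s' k).indicator 1 y :=
          ENNReal.tsum_comp_le_tsum_of_injective hf fun k => (s' k).indicator 1 y
      _ ≤ N := hN y (hsU i hi)
  · push Not at hy
    simp [Set.indicator_of_notMem (hy _)]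

theorem le_two_pow_succ_mul_of_abs_sub_le {a b L d δ : ℝ} (j : ℕ) (ha : 0 ≤ a) (hL : 0 ≤ L)
    (hδL : δ * L ≤ 1 / 4) (hab : |a - b| ≤ L * d) (hd : d ≤ 2 ^ (j + 1) * δ * a) :
    b ≤ 2 ^ (j + 1) * a := by
  have h2j : (1 : ℝ) ≤ 2 ^ j := one_le_pow₀ one_le_two
  have hLd : L * d ≤ 2 ^ j * a / 2 := calc
    L * d ≤ L * (2 ^ (j + 1) * δ * a) := by gcongr
    _ = 2 * (δ * L) * (2 ^ j * a) := by ring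
    _ ≤ 2 * (1 / 4) * (2 ^ j * a) := by gcongr
    _ = 2 ^ j * a / 2 := by ring
  have ha_le : a ≤ 2 ^ j * a := le_mul_of_one_le_left ha h2j
  rw [pow_succ]
  linarith [(abs_le.1 hab).1]

theorem ball_subset_ball_two_pow_of_abs_sub_le {E : Type*} [SeminormedAddCommGroup E]
    {w ζ : E} {a b L δ : ℝ} (j : ℕ) (ha : 0 ≤ a) (hL : 0 ≤ L) (hδ : 0 ≤ δ)
    (hδL : δ * L ≤ 1 / 4) (hab : |a - b| ≤ L * ‖w - ζ‖) (hwζ : ‖w - ζ‖ ≤ 2 ^ (j + 1) * δ * a) :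
    ball ζ (δ * b) ⊆ ball w (2 ^ (j + 2) * δ * a) := by
  have hb := le_two_pow_succ_mul_of_abs_sub_le j ha hL hδL hab hwζ
  refine ball_subset_ball' ?_
  rw [dist_comm, dist_eq_norm, pow_succ]
  nlinarith

theorem mul_lt_quarter_of_lt_inv_div_four {δ c : ℝ} (hc : 0 < c) (hδ : δ < c⁻¹ / 4) :
    δ * c < 1 / 4 :=
  calc δ * c < c⁻¹ / 4 * c := by gcongr
    _ = 1 / 4 := by field_simp

theorem stmt12_general (τ : ℂ → ℝ) (c₁ c₂ : ℝ) (hc₁ : 0 < c₁) (hc₂ : 0 < c₂)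
    (hτpos : ∀ z ∈ ball (0:ℂ) 1, 0 < τ z)
    (h1 : ∀ z ∈ ball (0:ℂ) 1, τ z ≤ c₁ * (1 - ‖z‖))
    (h2 : ∀ z ∈ ball (0:ℂ) 1, ∀ ζ ∈ ball (0:ℂ) 1,
      |τ z - τ ζ| ≤ c₂ * ‖z - ζ‖)
    (δ : ℝ) (hδ0 : 0 < δ) (hδ : δ < min 1 (min c₁⁻¹ c₂⁻¹) / 4)
    (z : ℕ → ℂ) (hzmem : ∀ k, z k ∈ ball (0:ℂ) 1)
    (N : ℕ) (hN : 0 < N)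
    (hmult : ∀ w ∈ ball (0:ℂ) 1,
      (∑' k, Set.indicator (ball (z k) (3 * δ * τ (z k))) (fun _ => (1:ℝ≥0∞)) w) ≤ N) :
    ∃ C : ℝ, 0 < C ∧ ∀ w ∈ ball (0:ℂ) 1, ∀ j : ℕ,
      (∑' k, Set.indicator
          {k' : ℕ | 2 ^ j * δ * τ w < ‖w - z k'‖ ∧
            ‖w - z k'‖ ≤ 2 ^ (j+1) * δ * τ w}
          (fun k' => ENNReal.ofReal (τ (z k') ^ 2)) k) ≤
        ENNReal.ofReal (C * 2 ^ (2*j) * τ w ^ 2) := by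
  have hδc₁ : δ * c₁ < 1 / 4 := mul_lt_quarter_of_lt_inv_div_four hc₁
    (hδ.trans_le (by gcongr; exact (min_le_right _ _).trans (min_le_left _ _)))
  have hδc₂ : δ * c₂ < 1 / 4 := mul_lt_quarter_of_lt_inv_div_four hc₂
    (hδ.trans_le (by gcongr; exact (min_le_right _ _).trans (min_le_right _ _)))
  have hτz : ∀ k, 0 < τ (z k) := fun k => hτpos _ (hzmem k)
  refine ⟨16 * N, by positivity, fun w hw j => ?_⟩
  set A : Set ℕ := {k | 2 ^ j * δ * τ w < ‖w - z k‖ ∧ ‖w - z k‖ ≤ 2 ^ (j+1) * δ * τ w}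
  have hτw := hτpos w hw
  have hdisc : ∀ k, ball (z k) (δ * τ (z k)) ⊆ ball 0 1 := fun k => by
    have hzk := mem_ball_zero_iff.1 (hzmem k)
    refine ball_subset_ball' ?_
    rw [dist_zero_right]
    nlinarith [h1 _ (hzmem k)]
  have hannulus (k : A) : ball (z k) (δ * τ (z k)) ⊆ ball w (2 ^ (j + 2) * δ * τ w) :=
    ball_subset_ball_two_pow_of_abs_sub_le j hτw.le hc₂.le hδ0.le hδc₂.le
      (h2 w hw _ (hzmem k)) k.2.2
  have hmultA (y : ℂ) :
      ∑' k : A, (ball (z k) (δ * τ (z k))).indicator (1 : ℂ → ℝ≥0∞) y ≤ N :=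
    tsum_indicator_le_of_subset_of_multiplicity_le Subtype.val_injective
      (fun k : A => ball_subset_ball (by nlinarith [hτz k])) (fun k => hdisc k) hmult y
  have hpack := tsum_ofReal_pow_finrank_le_of_multiplicity_le
    (fun k : A => (mul_pos hδ0 (hτz k)).le) (mul_nonneg (by positivity) hτw.le) hannulus
    fun y _ => hmultA y
  rw [Complex.finrank_real_complex] at hpack
  have hδsq : ENNReal.ofReal (δ ^ 2) ≠ 0 := by positivity
  rw [← tsum_subtype, ← ENNReal.mul_le_mul_iff_right hδsq ENNReal.ofReal_ne_top,
    ← ENNReal.tsum_mul_left]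
  convert hpack using 1
  · refine tsum_congr fun k => ?_
    rw [← ENNReal.ofReal_mul (sq_nonneg δ), mul_pow]
  · rw [← ENNReal.ofReal_natCast, ← ENNReal.ofReal_mul (sq_nonneg δ),
      ← ENNReal.ofReal_mul (Nat.cast_nonneg N)]
    ring_nf

/-- For a `(δ,τ)`-lattice `{z_k}`, one has `∑_{z_k ∈ R_j(z)} τ(z_k)² ≲ 2^{2j} τ(z)²`,
where `R_j(z) = {ξ ∈ 𝔻 : 2^j δ τ(z) < |z-ξ| ≤ 2^{j+1} δ τ(z)}`. -/
theorem stmt12 (τ : ℂ → ℝ) (c₁ c₂ : ℝ) (hc₁ : 0 < c₁) (hc₂ : 0 < c₂)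
    (hτpos : ∀ z ∈ ball (0:ℂ) 1, 0 < τ z)
    (h1 : ∀ z ∈ ball (0:ℂ) 1, τ z ≤ c₁ * (1 - ‖z‖))
    (h2 : ∀ z ∈ ball (0:ℂ) 1, ∀ ζ ∈ ball (0:ℂ) 1,
      |τ z - τ ζ| ≤ c₂ * ‖z - ζ‖)
    (δ : ℝ) (hδ0 : 0 < δ) (hδ : δ < min 1 (min c₁⁻¹ c₂⁻¹) / 4)
    (z : ℕ → ℂ) (hzmem : ∀ k, z k ∈ ball (0:ℂ) 1)
    (hsep : ∀ n k, n ≠ k → δ * τ (z k) ≤ ‖z n - z k‖)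
    (hcover : ∀ w ∈ ball (0:ℂ) 1, ∃ k, ‖w - z k‖ < δ * τ (z k))
    (N : ℕ) (hN : 0 < N)
    (hmult : ∀ w ∈ ball (0:ℂ) 1,
      (∑' k, Set.indicator (ball (z k) (3 * δ * τ (z k))) (fun _ => (1:ℝ≥0∞)) w) ≤ N) :
    ∃ C : ℝ, 0 < C ∧ ∀ w ∈ ball (0:ℂ) 1, ∀ j : ℕ,
      (∑' k, Set.indicator
          {k' : ℕ | 2 ^ j * δ * τ w < ‖w - z k'‖ ∧
            ‖w - z k'‖ ≤ 2 ^ (j+1) * δ * τ w}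
          (fun k' => ENNReal.ofReal (τ (z k') ^ 2)) k) ≤
        ENNReal.ofReal (C * 2 ^ (2*j) * τ w ^ 2) :=
  stmt12_general τ c₁ c₂ hc₁ hc₂ hτpos h1 h2 δ hδ0 hδ z hzmem N hN hmult
end

section
/- Let ω ∈ 𝒲, 0 < p < ∞, and suppose the pointwise estimate (Eq-gamma) |h(z)|^p ω(z)^β (1+φ'(z))^{-γ} ≲ τ(z)^{-2} ∫_{D_δ(z)} |h(ξ)|^p ω(ξ)^β (1+φ'(ξ))^{-γ} dA(ξ) holds for holomorphic h. If φ is an analytic self-map of 𝔻, g ∈ H(𝔻), and M(z) := |g(z)|·(1+φ'(φ(z)))/(1+φ'(z))·ω(z)^{1/2}/ω(φ(z))^{1/2}·τ(φ(z))^{-2/p} is bounded on 𝔻, then for all f holomorphic with ∫_𝔻 |f'|^p ω^{p/2}(1+φ')^{-p} dA < ∞, one has sup_z |f'(φ(z))| |g(z)| ω(z)^{1/2}/(1+φ'(z)) ≲ sup_z M(z) · (∫_𝔻 |f'(ξ)|^p ω(ξ)^{p/2}(1+φ'(ξ))^{-p} dA(ξ))^{1/p}. -/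
open Complex Metric MeasureTheory

/-!
Apply the pointwise estimate (Eq-gamma) with `β = p/2`, `γ = p` to `h = f'` at the point `σ z`.
Since `δ τ(σ z) < 1 - |σ z|`, the disc `D_δ(σ z)` lies in `𝔻`, so the local integral is at most the
global one `I`; taking `p`-th roots gives `|f'(σ z)| ω(σ z)^{1/2} τ(σ z)^{2/p} / (1 + φ'(σ z)) ≲ I^{1/p}`,
and multiplying by `M(z) ≤ B` yields the claim.
-/

lemma mul_le_of_le_mul_of_le_inv {δ c t d : ℝ} (ht : 0 ≤ t) (hd : 0 ≤ d) (htd : t ≤ c * d)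
    (hδ : δ ≤ c⁻¹) : δ * t ≤ d := by
  rcases le_or_gt c 0 with hc | hc
  · have : δ ≤ 0 := hδ.trans (inv_nonpos.2 hc)
    nlinarith
  · calc δ * t ≤ c⁻¹ * (c * d) := mul_le_mul hδ htd ht (inv_nonneg.2 hc.le)
      _ = d := by field_simp

lemma ball_subset_ball_zero_one_of_le_inv {E : Type*} [SeminormedAddCommGroup E] {u : E}
    {δ c t : ℝ} (hu : ‖u‖ < 1) (ht : 0 ≤ t) (htu : t ≤ c * (1 - ‖u‖)) (hδ : δ ≤ c⁻¹) :
    ball u (δ * t) ⊆ ball 0 1 := by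
  refine ball_subset_ball' ?_
  rw [dist_zero_right]
  linarith [mul_le_of_le_mul_of_le_inv ht (by linarith) htu hδ]

lemma rpow_one_div_le_of_rpow_div_le {a W T D K p : ℝ} (ha : 0 ≤ a) (hW : 0 ≤ W) (hT : 0 < T)
    (hD : 0 ≤ D) (hK : 0 ≤ K) (hp : 0 < p) (h : a ^ p * W ^ (p / 2) / D ^ p ≤ K / T ^ 2) :
    a * W ^ ((1 : ℝ) / 2) * T ^ ((2 : ℝ) / p) / D ≤ K ^ (1 / p) := by
  have hpow : (a * W ^ ((1 : ℝ) / 2) * T ^ ((2 : ℝ) / p) / D) ^ p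
      = a ^ p * W ^ (p / 2) / D ^ p * T ^ 2 := by
    rw [Real.div_rpow (by positivity) hD, Real.mul_rpow (by positivity) (by positivity),
      Real.mul_rpow ha (by positivity), ← Real.rpow_mul hT.le, ← Real.rpow_mul hW,
      div_mul_cancel₀ _ hp.ne', Real.rpow_two]
    ring_nf
  rw [one_div p, Real.le_rpow_inv_iff_of_pos (by positivity) hK hp, hpow]
  calc a ^ p * W ^ (p / 2) / D ^ p * T ^ 2 ≤ K / T ^ 2 * T ^ 2 := by gcongr
    _ = K := by field_simp

lemma setIntegral_le_setIntegral_of_subset {α : Type*} [MeasurableSpace α] {μ : Measure α}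
    {F : α → ℝ} {s t : Set α} (hts : t ⊆ s) (hs : MeasurableSet s) (hF : ∀ x ∈ s, 0 ≤ F x)
    (hint : IntegrableOn F s μ) : ∫ x in t, F x ∂μ ≤ ∫ x in s, F x ∂μ :=
  setIntegral_mono_set hint ((ae_restrict_iff' hs).2 (.of_forall hF)) hts.eventuallyLE

lemma mul_div_eq_mul_rpow_neg_mul {a G X Y Dz Du T q : ℝ} (hY : Y ≠ 0) (hDu : Du ≠ 0)
    (hT : 0 < T) :
    a * G * X / Dz = (G * (Du / Dz) * (X / Y) * T ^ (-q)) * (a * Y * T ^ q / Du) := by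
  have : T ^ q ≠ 0 := (Real.rpow_pos_of_pos hT q).ne'
  rw [Real.rpow_neg hT.le]
  field_simp

theorem stmt19_general (w τ : ℂ → ℝ) (v : ℝ → ℝ) (c₁ c₂ : ℝ)
    (hw : ∀ z : ℂ, w z = Real.exp (-2 * v (‖z‖)))
    (hτpos : ∀ z ∈ ball (0:ℂ) 1, 0 < τ z)
    (h1 : ∀ z ∈ ball (0:ℂ) 1, τ z ≤ c₁ * (1 - ‖z‖))
    (hv : ∀ r : ℝ, 0 ≤ r → r < 1 → 0 ≤ deriv v r)
    (p : ℝ) (hp : 0 < p)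
    (δ : ℝ) (hδ : δ < min 1 (min c₁⁻¹ c₂⁻¹) / 4)
    (σ : ℂ → ℂ)
    (hσmap : ∀ z ∈ ball (0:ℂ) 1, σ z ∈ ball (0:ℂ) 1)
    (hEq : ∀ β γ : ℝ, ∃ C : ℝ, 0 < C ∧
      ∀ h : ℂ → ℂ, DifferentiableOn ℂ h (ball (0:ℂ) 1) → ∀ z ∈ ball (0:ℂ) 1,
        ‖h z‖ ^ p * w z ^ β / (1 + deriv v (‖z‖)) ^ γ ≤
          C / τ z ^ 2 * ∫ ξ in ball z (δ * τ z),
            ‖h ξ‖ ^ p * w ξ ^ β / (1 + deriv v (‖ξ‖)) ^ γ) :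
    ∃ C : ℝ, 0 < C ∧ ∀ (g : ℂ → ℂ), DifferentiableOn ℂ g (ball (0:ℂ) 1) →
      ∀ B : ℝ, 0 ≤ B →
      (∀ z ∈ ball (0:ℂ) 1,
        ‖g z‖ *
          ((1 + deriv v (‖σ z‖)) / (1 + deriv v (‖z‖))) *
          (w z ^ ((1:ℝ)/2) / w (σ z) ^ ((1:ℝ)/2)) * τ (σ z) ^ (-(2:ℝ)/p) ≤ B) →
      ∀ f : ℂ → ℂ, DifferentiableOn ℂ f (ball (0:ℂ) 1) →
        IntegrableOn (fun ξ => ‖deriv f ξ‖ ^ p * w ξ ^ (p/2) /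
          (1 + deriv v (‖ξ‖)) ^ p) (ball (0:ℂ) 1) →
        ∀ z ∈ ball (0:ℂ) 1,
          ‖deriv f (σ z)‖ * ‖g z‖ * w z ^ ((1:ℝ)/2) /
              (1 + deriv v (‖z‖)) ≤
            C * B * (∫ ξ in ball (0:ℂ) 1, ‖deriv f ξ‖ ^ p * w ξ ^ (p/2) /
              (1 + deriv v (‖ξ‖)) ^ p) ^ (1/p) := by
  obtain ⟨C, hC, hlocal⟩ := hEq (p / 2) p
  refine ⟨C ^ (1 / p), by positivity, ?_⟩
  intro g _ B hB hM f hf hfint z hz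
  set I := ∫ ξ in ball (0:ℂ) 1, ‖deriv f ξ‖ ^ p * w ξ ^ (p / 2) / (1 + deriv v (‖ξ‖)) ^ p
  have hw_pos (ξ : ℂ) : 0 < w ξ := hw ξ ▸ Real.exp_pos _
  have hv_pos : ∀ ξ ∈ ball (0:ℂ) 1, 0 < 1 + deriv v (‖ξ‖) := fun ξ hξ => by
    linarith [hv _ (norm_nonneg ξ) (mem_ball_zero_iff.1 hξ)]
  have hF_nonneg : ∀ ξ ∈ ball (0:ℂ) 1,
      0 ≤ ‖deriv f ξ‖ ^ p * w ξ ^ (p / 2) / (1 + deriv v (‖ξ‖)) ^ p := fun ξ hξ => by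
    have := hv_pos ξ hξ
    have := hw_pos ξ
    positivity
  have hu : σ z ∈ ball (0:ℂ) 1 := hσmap z hz
  have hτu := hτpos _ hu
  have hc₁ : 0 < c₁ := pos_of_mul_pos_left (hτu.trans_le (h1 _ hu))
    (by linarith [mem_ball_zero_iff.1 hu])
  have hδc : δ ≤ c₁⁻¹ := by
    linarith [min_le_right 1 (min c₁⁻¹ c₂⁻¹), min_le_left c₁⁻¹ c₂⁻¹, inv_pos.2 hc₁]
  have hdisc : ball (σ z) (δ * τ (σ z)) ⊆ ball (0:ℂ) 1 :=
    ball_subset_ball_zero_one_of_le_inv (mem_ball_zero_iff.1 hu) hτu.le (h1 _ hu) hδc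
  have hI : 0 ≤ I := setIntegral_nonneg measurableSet_ball hF_nonneg
  have hfu : ‖deriv f (σ z)‖ ^ p * w (σ z) ^ (p / 2) / (1 + deriv v (‖σ z‖)) ^ p
      ≤ C * I / τ (σ z) ^ 2 := by
    refine (hlocal (deriv f) (hf.deriv isOpen_ball) _ hu).trans ?_
    rw [← div_mul_eq_mul_div]
    exact mul_le_mul_of_nonneg_left
      (setIntegral_le_setIntegral_of_subset hdisc measurableSet_ball hF_nonneg hfint)
      (by positivity)
  have hA := rpow_one_div_le_of_rpow_div_le (norm_nonneg _) (hw_pos _).le hτu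
    (hv_pos _ hu).le (by positivity) hp hfu
  have hMz := hM z hz
  rw [neg_div] at hMz
  rw [mul_div_eq_mul_rpow_neg_mul (q := 2 / p) (Real.rpow_pos_of_pos (hw_pos _) _).ne'
    (hv_pos _ hu).ne' hτu]
  have := hw_pos (σ z)
  have := hv_pos _ hu
  calc _ ≤ B * (C * I) ^ (1 / p) := mul_le_mul hMz hA (by positivity) hB
    _ = C ^ (1 / p) * B * I ^ (1 / p) := by rw [Real.mul_rpow hC.le hI]; ring

/-- Sufficiency direction of Theorem 1(B): if
`M(z) = |g(z)| (1+φ'(σ(z)))/(1+φ'(z)) · ω(z)^{1/2}/ω(σ(z))^{1/2} · τ(σ(z))^{-2/p}` is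
bounded on `𝔻`, then for `f` with `∫_𝔻 |f'|^p ω^{p/2} (1+φ')^{-p} dA < ∞`,
`sup_z |f'(σ(z))||g(z)| ω(z)^{1/2}/(1+φ'(z)) ≲ (sup M) (∫_𝔻 |f'|^p ω^{p/2}(1+φ')^{-p})^{1/p}`. -/
theorem stmt19 (w τ : ℂ → ℝ) (v : ℝ → ℝ) (c₁ c₂ : ℝ) (hc₁ : 0 < c₁) (hc₂ : 0 < c₂)
    (hw : ∀ z : ℂ, w z = Real.exp (-2 * v (‖z‖)))
    (hτpos : ∀ z ∈ ball (0:ℂ) 1, 0 < τ z)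
    (h1 : ∀ z ∈ ball (0:ℂ) 1, τ z ≤ c₁ * (1 - ‖z‖))
    (h2 : ∀ z ∈ ball (0:ℂ) 1, ∀ ζ ∈ ball (0:ℂ) 1,
      |τ z - τ ζ| ≤ c₂ * ‖z - ζ‖)
    (hv : ∀ r : ℝ, 0 ≤ r → r < 1 → 0 ≤ deriv v r)
    (p : ℝ) (hp : 0 < p)
    (δ : ℝ) (hδ0 : 0 < δ) (hδ : δ < min 1 (min c₁⁻¹ c₂⁻¹) / 4)
    (σ : ℂ → ℂ) (hσhol : DifferentiableOn ℂ σ (ball (0:ℂ) 1))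
    (hσmap : ∀ z ∈ ball (0:ℂ) 1, σ z ∈ ball (0:ℂ) 1)
    (hEq : ∀ β γ : ℝ, ∃ C : ℝ, 0 < C ∧
      ∀ h : ℂ → ℂ, DifferentiableOn ℂ h (ball (0:ℂ) 1) → ∀ z ∈ ball (0:ℂ) 1,
        ‖h z‖ ^ p * w z ^ β / (1 + deriv v (‖z‖)) ^ γ ≤
          C / τ z ^ 2 * ∫ ξ in ball z (δ * τ z),
            ‖h ξ‖ ^ p * w ξ ^ β / (1 + deriv v (‖ξ‖)) ^ γ) :
    ∃ C : ℝ, 0 < C ∧ ∀ (g : ℂ → ℂ), DifferentiableOn ℂ g (ball (0:ℂ) 1) →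
      ∀ B : ℝ, 0 ≤ B →
      (∀ z ∈ ball (0:ℂ) 1,
        ‖g z‖ *
          ((1 + deriv v (‖σ z‖)) / (1 + deriv v (‖z‖))) *
          (w z ^ ((1:ℝ)/2) / w (σ z) ^ ((1:ℝ)/2)) * τ (σ z) ^ (-(2:ℝ)/p) ≤ B) →
      ∀ f : ℂ → ℂ, DifferentiableOn ℂ f (ball (0:ℂ) 1) →
        IntegrableOn (fun ξ => ‖deriv f ξ‖ ^ p * w ξ ^ (p/2) /
          (1 + deriv v (‖ξ‖)) ^ p) (ball (0:ℂ) 1) →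
        ∀ z ∈ ball (0:ℂ) 1,
          ‖deriv f (σ z)‖ * ‖g z‖ * w z ^ ((1:ℝ)/2) /
              (1 + deriv v (‖z‖)) ≤
            C * B * (∫ ξ in ball (0:ℂ) 1, ‖deriv f ξ‖ ^ p * w ξ ^ (p/2) /
              (1 + deriv v (‖ξ‖)) ^ p) ^ (1/p) :=
  stmt19_general w τ v c₁ c₂ hw hτpos h1 hv p hp δ hδ σ hσmap hEq
end
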